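/- Let ℓ : K → !Σ be a labelled precubical set and let Σ' ⊆ Σ carry the induced total order, so that there is a canonical levelwise-injective morphism of precubical sets !Σ' → !Σ. Let L be the pullback of ℓ : K → !Σ along !Σ' → !Σ in the category of precubical sets; concretely, L_n = {x ∈ K_n : ℓ(x) ∈ (!Σ')_n}. Then: (i) L_0 = K_0; (ii) setting M_n := L ∪ K_{≤n} (a sub-precubical set of K), one has M_0 = L, K = ⋃_n M_n, and for every n ≥ 1 the square with top map ⊔_{x ∈ K_n∖L_n} ∂□[n] → M_{n-1} (given by the boundaries of the cubes x), left map the coproduct of the inclusions ∂□[n] ↪ □[n], right map the inclusion M_{n-1} ↪ M_n, and bottom map ⊔_{x ∈ K_n∖L_n} □[n] → M_n, is a pushout square of precubical sets. Hence the inclusion L ↪ K is a relative {∂□[n] ↪ □[n] : n ≥ 1}-cell complex. -/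

import Mathlib

open CategoryTheory CategoryTheory.Limits Opposite

/-!
Statement 4: the pullback `L` of a labelled precubical set `ℓ : K → !Σ` along
`!Σ' → !Σ` (for a subset `Σ' ⊆ Σ` with the induced total order) contains all
vertices of `K`, and `K` is obtained from `L` by attaching cells
`∂□[n] ↪ □[n]` (`n ≥ 1`), through the filtration `M_n = L ∪ K_{≤n}`.

The cube category `□` is encoded as `BoxCat`: objects are the sets
`[n] = {0,1}^n` (given by their dimension), morphisms are the set maps that
are composites of coface maps `δ_i^α = Fin.insertNth i α`.  Precubical sets
are presheaves `BoxCatᵒᵖ ⥤ Type`; `□[n] = yoneda.obj (bx n)`, and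
`K_n = K.obj (op (bx n))`.  The labelling object `!Σ` is the precubical set
`bang Λ` of nondecreasing words over the totally ordered set `Λ`, a morphism
of `□` acting on words by deleting the letters of the non-retained
coordinates (both face maps `∂_i^0 = ∂_i^1` delete the `i`-th letter).
-/

inductive IsBoxMap : ∀ {m n : ℕ}, ((Fin m → Bool) → (Fin n → Bool)) → Prop
  | id (m : ℕ) : IsBoxMap (id : (Fin m → Bool) → (Fin m → Bool))
  | comp {m n : ℕ} (i : Fin (n + 1)) (α : Bool) {f : (Fin m → Bool) → (Fin n → Bool)} :
      IsBoxMap f → IsBoxMap fun ε => i.insertNth α (f ε)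

theorem IsBoxMap.le {m n : ℕ} {f : (Fin m → Bool) → (Fin n → Bool)}
    (h : IsBoxMap f) : m ≤ n := by
  induction h with
  | id => exact le_rfl
  | comp i α h ih => exact ih.trans (Nat.le_succ _)

theorem IsBoxMap.comp' {m n p : ℕ} {f : (Fin m → Bool) → (Fin n → Bool)}
    {g : (Fin n → Bool) → (Fin p → Bool)} (hf : IsBoxMap f) (hg : IsBoxMap g) :
    IsBoxMap (g ∘ f) := by
  induction hg with
  | id => exact hf
  | comp i α h ih => exact ih.comp i α

structure BoxCat where
  dim : ℕ

abbrev bx (n : ℕ) : BoxCat := ⟨n⟩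

instance : Category BoxCat where
  Hom m n := { f : (Fin m.dim → Bool) → (Fin n.dim → Bool) // IsBoxMap f }
  id m := ⟨id, .id m.dim⟩
  comp f g := ⟨g.1 ∘ f.1, f.2.comp' g.2⟩
  id_comp _ := Subtype.ext rfl
  comp_id _ := Subtype.ext rfl
  assoc _ _ _ := Subtype.ext rfl

theorem BoxCat.hom_le {m n : BoxCat} (f : m ⟶ n) : m.dim ≤ n.dim := f.2.le

/-- A representation of a box map `f : {0,1}^m → {0,1}^n` by the strictly
increasing map `σ : Fin m → Fin n` of "retained coordinates". -/
def IsRepr {m n : ℕ} (f : (Fin m → Bool) → (Fin n → Bool)) (σ : Fin m → Fin n) : Prop :=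
  StrictMono σ ∧ (∀ ε k, f ε (σ k) = ε k) ∧
    (∀ j, (∀ k, σ k ≠ j) → ∀ ε ε', f ε j = f ε' j)

theorem IsBoxMap.exists_repr {m n : ℕ} {f : (Fin m → Bool) → (Fin n → Bool)}
    (h : IsBoxMap f) : ∃ σ : Fin m → Fin n, IsRepr f σ := by
  induction h with
  | id =>
    exact ⟨_root_.id, strictMono_id, fun ε k => rfl, fun j hj ε ε' => absurd rfl (hj j)⟩
  | @comp n' i α g hg ih =>
    obtain ⟨σ, hs, he, hc⟩ := ih
    refine ⟨fun k => i.succAbove (σ k), ((Fin.strictMono_succAbove i).comp hs), ?_, ?_⟩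
    · intro ε k
      simp only [Fin.insertNth_apply_succAbove]
      exact he ε k
    · intro j hj ε ε'
      rcases eq_or_ne j i with rfl | hne
      · simp only [Fin.insertNth_apply_same]
      · obtain ⟨j', rfl⟩ := Fin.exists_succAbove_eq hne
        simp only [Fin.insertNth_apply_succAbove]
        exact hc j' (fun k hk => hj k (congrArg i.succAbove hk)) ε ε'

theorem IsRepr.unique {m n : ℕ} {f : (Fin m → Bool) → (Fin n → Bool)}
    {σ τ : Fin m → Fin n} (hσ : IsRepr f σ) (hτ : IsRepr f τ) : σ = τ := by
  obtain ⟨hσ1, hσ2, hσ3⟩ := hσ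
  obtain ⟨hτ1, hτ2, hτ3⟩ := hτ
  have key : ∀ (σ' τ' : Fin m → Fin n), (∀ ε k, f ε (σ' k) = ε k) →
      (∀ j, (∀ k, τ' k ≠ j) → ∀ ε ε', f ε j = f ε' j) →
      Set.range σ' ⊆ Set.range τ' := by
    intro σ' τ' he hc j hj
    obtain ⟨k, rfl⟩ := hj
    by_contra hr
    simp only [Set.mem_range, not_exists] at hr
    have h2 := hc (σ' k) (fun k' h => hr k' h) (fun _ => true) (fun _ => false)
    rw [he, he] at h2
    simp at h2
  exact (StrictMono.range_inj hσ1 hτ1).1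
    (Set.Subset.antisymm (key σ τ hσ2 hτ3) (key τ σ hτ2 hσ3))

/-- The strictly increasing map of retained coordinates of a morphism of `□`. -/
noncomputable def boxSigma {m n : BoxCat} (f : m ⟶ n) : Fin m.dim → Fin n.dim :=
  f.2.exists_repr.choose

theorem boxSigma_isRepr {m n : BoxCat} (f : m ⟶ n) : IsRepr f.1 (boxSigma f) :=
  f.2.exists_repr.choose_spec

theorem boxSigma_strictMono {m n : BoxCat} (f : m ⟶ n) : StrictMono (boxSigma f) :=
  (boxSigma_isRepr f).1

theorem boxSigma_id (m : BoxCat) : boxSigma (𝟙 m) = _root_.id :=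
  (boxSigma_isRepr (𝟙 m)).unique
    ⟨strictMono_id, fun _ _ => rfl, fun j hj _ _ => absurd rfl (hj j)⟩

theorem boxSigma_comp {m n p : BoxCat} (f : m ⟶ n) (g : n ⟶ p) :
    boxSigma (f ≫ g) = boxSigma g ∘ boxSigma f := by
  obtain ⟨hf1, hf2, hf3⟩ := boxSigma_isRepr f
  obtain ⟨hg1, hg2, hg3⟩ := boxSigma_isRepr g
  refine (boxSigma_isRepr (f ≫ g)).unique ⟨hg1.comp hf1, ?_, ?_⟩
  · intro ε k
    show g.1 (f.1 ε) (boxSigma g (boxSigma f k)) = ε k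
    rw [hg2, hf2]
  · intro j hj ε ε'
    show g.1 (f.1 ε) j = g.1 (f.1 ε') j
    by_cases hrg : ∃ k, boxSigma g k = j
    · obtain ⟨k, rfl⟩ := hrg
      rw [hg2, hg2]
      exact hf3 k (fun k' hk' => hj k' (congrArg (boxSigma g) hk')) ε ε'
    · push_neg at hrg
      exact hg3 j hrg _ _

/-- The labelling precubical set `!Σ` of a totally ordered set of labels `Λ`:
`(!Σ)_n` is the set of nondecreasing `n`-tuples of labels, and a morphism
`f : [m] → [n]` of `□` acts by keeping the letters of the `m` coordinates
retained by `f` (so that both face maps `∂_i^0` and `∂_i^1` delete the `i`-th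
letter). -/
noncomputable def bang (Λ : Type) [LinearOrder Λ] : BoxCatᵒᵖ ⥤ Type where
  obj k := { w : Fin (unop k).dim → Λ // Monotone w }
  map {k k'} g := ↾fun w => ⟨w.1 ∘ boxSigma g.unop, w.2.comp (boxSigma_strictMono g.unop).monotone⟩
  map_id k := by
    refine ConcreteCategory.hom_ext _ _ fun w => ?_
    refine Subtype.ext ?_
    show w.1 ∘ boxSigma (𝟙 (unop k)) = w.1
    rw [boxSigma_id]
    rfl
  map_comp {k k' k''} g g' := by
    refine ConcreteCategory.hom_ext _ _ fun w => ?_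
    refine Subtype.ext ?_
    show w.1 ∘ boxSigma (g'.unop ≫ g.unop) = (w.1 ∘ boxSigma g.unop) ∘ boxSigma g'.unop
    rw [boxSigma_comp]
    rfl

/-- The boundary `∂□[n]` of the representable precubical set `□[n]`. -/
def boundaryBox (n : ℕ) : BoxCatᵒᵖ ⥤ Type where
  obj k := { f : unop k ⟶ bx n // (unop k).dim < n }
  map {k k'} g := ↾fun f => ⟨g.unop ≫ f.1, lt_of_le_of_lt (BoxCat.hom_le g.unop) f.2⟩
  map_id k := by refine ConcreteCategory.hom_ext _ _ fun f => ?_; exact Subtype.ext (Category.id_comp f.1)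
  map_comp {k k' k''} g g' := by
    refine ConcreteCategory.hom_ext _ _ fun f => ?_; exact Subtype.ext (Category.assoc g'.unop g.unop f.1)

/-- The inclusion of precubical sets `∂□[n] ⊆ □[n]`. -/
def boundaryIncl (n : ℕ) : boundaryBox n ⟶ yoneda.obj (bx n) where
  app _ := ↾fun f => f.1
  naturality _ _ _ := rfl

variable {Λ : Type} [LinearOrder Λ]

/-- The canonical levelwise-injective morphism `!Σ' → !Σ` induced by a subset
`S = Σ' ⊆ Σ` with the induced total order. -/
def bangIncl (S : Set Λ) : bang (↥S) ⟶ bang Λ where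
  app k := ↾fun w => ⟨fun i => (w.1 i : Λ), fun _ _ h => Subtype.coe_le_coe.2 (w.2 h)⟩
  naturality _ _ _ := rfl

/-- The property, for an `n`-cube `x ∈ K_n` of a labelled precubical set
`ℓ : K → !Σ`, that all letters of the label word `ℓ(x)` lie in the subset `S`,
i.e. that `ℓ(x) ∈ (!Σ')_n`. -/
def labelsIn {K : BoxCatᵒᵖ ⥤ Type} (ℓ : K ⟶ bang Λ) (S : Set Λ)
    {k : BoxCatᵒᵖ} (x : K.obj k) : Prop :=
  ∀ i, (ℓ.app k x).1 i ∈ S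

theorem labelsIn_map {K : BoxCatᵒᵖ ⥤ Type} (ℓ : K ⟶ bang Λ) (S : Set Λ)
    {k k' : BoxCatᵒᵖ} (g : k ⟶ k') (x : K.obj k) (hx : labelsIn ℓ S x) :
    labelsIn ℓ S (K.map g x) := by
  intro i
  have h := types_congr_hom (ℓ.naturality g) x
  simp only [types_comp_apply] at h
  show (ℓ.app k' (K.map g x)).1 i ∈ S
  rw [h]
  exact hx _

/-- The pullback `L` of a labelled precubical set `ℓ : K → !Σ` along `!Σ' → !Σ`:
concretely, `L_n = {x ∈ K_n : ℓ(x) ∈ (!Σ')_n}`. -/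
def labelPullback (K : BoxCatᵒᵖ ⥤ Type) (ℓ : K ⟶ bang Λ) (S : Set Λ) :
    BoxCatᵒᵖ ⥤ Type where
  obj k := { x : K.obj k // labelsIn ℓ S x }
  map {k k'} g := ↾fun x => ⟨K.map g x.1, labelsIn_map ℓ S g x.1 x.2⟩
  map_id k := by refine ConcreteCategory.hom_ext _ _ fun x => ?_; exact Subtype.ext (types_congr_hom (K.map_id k) x.1)
  map_comp {k k' k''} g g' := by
    refine ConcreteCategory.hom_ext _ _ fun x => ?_; exact Subtype.ext (types_congr_hom (K.map_comp g g') x.1)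

/-- The inclusion `L ⊆ K`. -/
def labelPullbackIncl (K : BoxCatᵒᵖ ⥤ Type) (ℓ : K ⟶ bang Λ) (S : Set Λ) :
    labelPullback K ℓ S ⟶ K where
  app _ := ↾fun x => x.1
  naturality _ _ _ := rfl

/-- The labelling `L → !Σ'` of the pullback `L`. -/
def labelPullbackLabel (K : BoxCatᵒᵖ ⥤ Type) (ℓ : K ⟶ bang Λ) (S : Set Λ) :
    labelPullback K ℓ S ⟶ bang (↥S) where
  app k := ↾fun x => ⟨fun i => ⟨(ℓ.app k x.1).1 i, x.2 i⟩,
    fun _ _ h => Subtype.mk_le_mk.2 ((ℓ.app k x.1).2 h)⟩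
  naturality k k' g := by
    refine ConcreteCategory.hom_ext _ _ fun x => ?_
    refine Subtype.ext (funext fun i => Subtype.ext ?_)
    show (ℓ.app k' (K.map g x.1)).1 i = (ℓ.app k x.1).1 (boxSigma g.unop i)
    have h := types_congr_hom (ℓ.naturality g) x.1
    simp only [types_comp_apply] at h
    rw [h]
    rfl

/-- The sub-precubical set `M_n = L ∪ K_{≤n}` of `K`. -/
def unionStage (K : BoxCatᵒᵖ ⥤ Type) (ℓ : K ⟶ bang Λ) (S : Set Λ) (n : ℕ) :
    BoxCatᵒᵖ ⥤ Type where
  obj k := { x : K.obj k // labelsIn ℓ S x ∨ (unop k).dim ≤ n }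
  map {k k'} g := ↾fun x => ⟨K.map g x.1,
    x.2.imp (labelsIn_map ℓ S g x.1) (fun h => le_trans (BoxCat.hom_le g.unop) h)⟩
  map_id k := by refine ConcreteCategory.hom_ext _ _ fun x => ?_; exact Subtype.ext (types_congr_hom (K.map_id k) x.1)
  map_comp {k k' k''} g g' := by
    refine ConcreteCategory.hom_ext _ _ fun x => ?_; exact Subtype.ext (types_congr_hom (K.map_comp g g') x.1)

/-- The inclusion `L ⊆ M_0`. -/
def labelPullbackToStage (K : BoxCatᵒᵖ ⥤ Type) (ℓ : K ⟶ bang Λ) (S : Set Λ) :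
    labelPullback K ℓ S ⟶ unionStage K ℓ S 0 where
  app _ := ↾fun x => ⟨x.1, Or.inl x.2⟩
  naturality _ _ _ := rfl

/-- The inclusion `M_m ⊆ M_n` for `m ≤ n`. -/
def unionStageIncl (K : BoxCatᵒᵖ ⥤ Type) (ℓ : K ⟶ bang Λ) (S : Set Λ)
    {m n : ℕ} (h : m ≤ n) : unionStage K ℓ S m ⟶ unionStage K ℓ S n where
  app _ := ↾fun x => ⟨x.1, x.2.imp _root_.id (fun h' => h'.trans h)⟩
  naturality _ _ _ := rfl

/-- The chain `M_0 ↪ M_1 ↪ ⋯`. -/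
def unionStageChain (K : BoxCatᵒᵖ ⥤ Type) (ℓ : K ⟶ bang Λ) (S : Set Λ) :
    ℕ ⥤ BoxCatᵒᵖ ⥤ Type where
  obj n := unionStage K ℓ S n
  map {m n} g := unionStageIncl K ℓ S (leOfHom g)
  map_id _ := rfl
  map_comp _ _ := rfl

/-- The cocone on the chain `M_0 ↪ M_1 ↪ ⋯` given by the inclusions `M_n ⊆ K`. -/
def unionStageCocone (K : BoxCatᵒᵖ ⥤ Type) (ℓ : K ⟶ bang Λ) (S : Set Λ) :
    Cocone (unionStageChain K ℓ S) where
  pt := K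
  ι := { app := fun n => { app := fun _ => ↾fun x => x.1, naturality := fun _ _ _ => rfl }
         naturality := fun _ _ _ => rfl }

/-- The boundary `∂□[n+1] → M_n` of an `(n+1)`-cube `x ∈ K_{n+1}`. -/
def stageCellBoundary (K : BoxCatᵒᵖ ⥤ Type) (ℓ : K ⟶ bang Λ) (S : Set Λ) (n : ℕ)
    (x : K.obj (op (bx (n + 1)))) : boundaryBox (n + 1) ⟶ unionStage K ℓ S n where
  app k := ↾fun f => ⟨K.map f.1.op x, Or.inr (by have := f.2; omega)⟩
  naturality k k' g := by
    refine ConcreteCategory.hom_ext _ _ fun f => ?_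
    refine Subtype.ext ?_
    show K.map (g.unop ≫ f.1).op x = K.map g (K.map f.1.op x)
    rw [op_comp, K.map_comp]
    rfl

/-- The Yoneda morphism `□[n+1] → M_{n+1}` of an `(n+1)`-cube `x ∈ K_{n+1}`. -/
def stageCellMap (K : BoxCatᵒᵖ ⥤ Type) (ℓ : K ⟶ bang Λ) (S : Set Λ) (n : ℕ)
    (x : K.obj (op (bx (n + 1)))) : yoneda.obj (bx (n + 1)) ⟶ unionStage K ℓ S (n + 1) where
  app k := ↾fun f => ⟨K.map f.op x, Or.inr (BoxCat.hom_le f)⟩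
  naturality k k' g := by
    refine ConcreteCategory.hom_ext _ _ fun f => ?_
    refine Subtype.ext ?_
    show K.map (g.unop ≫ f).op x = K.map g (K.map f.op x)
    rw [op_comp, K.map_comp]
    rfl

/-!
A cube of `K` whose label word has a letter outside `Σ'` has positive dimension, since the
empty word lies in `!Σ'`; so `M_0 = L`, and `M_{n+1}` differs from `M_n` only by the
`(n+1)`-cubes `x ∉ L`, all of whose faces already lie in `M_n`. Hence a morphism out of
`M_{n+1}` is determined by its restriction to `M_n` and its values on these cubes, and
compatible such data glue, because every morphism of `□` has target of dimension at least its
source and the only endomorphism of `[n+1]` is the identity.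
-/

theorem BoxCat.endo_eq_id {m : BoxCat} (f : m ⟶ m) : f = 𝟙 m := by
  obtain ⟨hmono, hretained, -⟩ := boxSigma_isRepr f
  refine Subtype.ext (funext fun ε => funext fun j => ?_)
  have h := hretained ε j
  rwa [hmono.eq_id] at h

theorem labelsIn_of_dim_eq_zero {K : BoxCatᵒᵖ ⥤ Type} (ℓ : K ⟶ bang Λ) (S : Set Λ)
    {k : BoxCatᵒᵖ} (h : (unop k).dim = 0) (x : K.obj k) : labelsIn ℓ S x :=
  fun i => absurd i.isLt (by omega)

section

variable (K : BoxCatᵒᵖ ⥤ Type) (ℓ : K ⟶ bang Λ) (S : Set Λ)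

theorem labelPullback_isPullback :
    IsPullback (labelPullbackIncl K ℓ S) (labelPullbackLabel K ℓ S) ℓ (bangIncl S) := by
  refine IsPullback.of_forall_isPullback_app fun k => (Types.isPullback_iff _ _ _ _).2
    ⟨rfl, fun x y h => Subtype.ext h.1, fun x w hxw => ⟨⟨x, fun i => ?_⟩, rfl, ?_⟩⟩
  · rw [show ℓ.app k x = _ from hxw]
    exact (w.1 i).2
  · exact Subtype.ext (funext fun i => Subtype.ext (congrArg (fun v => v.1 i) hxw))

theorem labelPullbackIncl_app_zero_bijective :
    Function.Bijective ((labelPullbackIncl K ℓ S).app (op (bx 0))) :=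
  ⟨fun _ _ h => Subtype.ext h, fun x => ⟨⟨x, labelsIn_of_dim_eq_zero ℓ S rfl x⟩, rfl⟩⟩

instance isIso_labelPullbackToStage : IsIso (labelPullbackToStage K ℓ S) := by
  have (k : BoxCatᵒᵖ) : IsIso ((labelPullbackToStage K ℓ S).app k) :=
    (isIso_iff_bijective _).2 ⟨fun _ _ h => Subtype.ext (congrArg (·.1) h :),
      fun x => ⟨⟨x.1, x.2.elim id fun h =>
        labelsIn_of_dim_eq_zero ℓ S (Nat.le_zero.1 h) x.1⟩, rfl⟩⟩
  exact NatIso.isIso_of_isIso_app _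

noncomputable def unionStageCoconeIsColimit : IsColimit (unionStageCocone K ℓ S) :=
  evaluationJointlyReflectsColimits _ fun k =>
    Types.FilteredColimit.isColimitOf' _ _
      (fun x => ⟨(unop k).dim, ⟨x, Or.inr le_rfl⟩, rfl⟩)
      fun i _ _ h => ⟨i, 𝟙 i, congrArg _ (Subtype.ext h)⟩

end

section Attaching

variable {K : BoxCatᵒᵖ ⥤ Type} {ℓ : K ⟶ bang Λ} {S : Set Λ} {n : ℕ}

variable (K ℓ S n) in
abbrev attachedCells : Type := { x : K.obj (op (bx (n + 1))) // ¬ labelsIn ℓ S x }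

theorem stageCellBoundary_comp_unionStageIncl (x : K.obj (op (bx (n + 1)))) :
    stageCellBoundary K ℓ S n x ≫ unionStageIncl K ℓ S (Nat.le_succ n) =
      boundaryIncl (n + 1) ≫ stageCellMap K ℓ S n x :=
  rfl

theorem dim_eq_of_not_mem_unionStage {k : BoxCatᵒᵖ} (y : (unionStage K ℓ S (n + 1)).obj k)
    (h : ¬ (labelsIn ℓ S y.1 ∨ (unop k).dim ≤ n)) : unop k = bx (n + 1) :=
  congrArg BoxCat.mk (le_antisymm (y.2.resolve_left fun hy => h (Or.inl hy))
    (not_le.1 fun hk => h (Or.inr hk)))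

theorem unionStage_succ_cases {k : BoxCatᵒᵖ} (y : (unionStage K ℓ S (n + 1)).obj k) :
    y ∈ Set.range ((unionStageIncl K ℓ S (Nat.le_succ n)).app k) ∨
      ∃ (x : attachedCells K ℓ S n) (f : unop k ⟶ bx (n + 1)),
        (stageCellMap K ℓ S n x.1).app k f = y := by
  by_cases h : labelsIn ℓ S y.1 ∨ (unop k).dim ≤ n
  · exact Or.inl ⟨⟨y.1, h⟩, rfl⟩
  · obtain ⟨⟨d⟩⟩ := k
    obtain rfl : d = n + 1 := congrArg BoxCat.dim (dim_eq_of_not_mem_unionStage y h)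
    exact Or.inr ⟨⟨y.1, fun hy => h (Or.inl hy)⟩, 𝟙 _,
      Subtype.ext (by exact K.map_id_apply _ y.1)⟩

theorem unionStage_succ_hom_ext {X : BoxCatᵒᵖ ⥤ Type}
    {m m' : unionStage K ℓ S (n + 1) ⟶ X}
    (hM : unionStageIncl K ℓ S (Nat.le_succ n) ≫ m =
      unionStageIncl K ℓ S (Nat.le_succ n) ≫ m')
    (hcell : ∀ x : attachedCells K ℓ S n,
      stageCellMap K ℓ S n x.1 ≫ m = stageCellMap K ℓ S n x.1 ≫ m') :
    m = m' := by
  ext k y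
  obtain ⟨y, rfl⟩ | ⟨x, f, rfl⟩ := unionStage_succ_cases y
  · exact ConcreteCategory.congr_hom (NatTrans.congr_app hM k) y
  · exact ConcreteCategory.congr_hom (NatTrans.congr_app (hcell x) k) f

variable {X : BoxCatᵒᵖ ⥤ Type} (inl : unionStage K ℓ S n ⟶ X)
  (cell : attachedCells K ℓ S n → (yoneda.obj (bx (n + 1)) ⟶ X))

open Classical in
noncomputable def attachDescApp (k : BoxCatᵒᵖ) (y : (unionStage K ℓ S (n + 1)).obj k) :
    X.obj k :=
  if h : labelsIn ℓ S y.1 ∨ (unop k).dim ≤ n then inl.app k ⟨y.1, h⟩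
  else
    have e := dim_eq_of_not_mem_unionStage y h
    (cell ⟨K.map (eqToHom e.symm).op y.1, fun hy => h (Or.inl (by
      simpa using labelsIn_map ℓ S (eqToHom e).op _ hy))⟩).app k (eqToHom e)

variable {inl cell}

theorem attachDescApp_of_mem {k : BoxCatᵒᵖ} (y : (unionStage K ℓ S (n + 1)).obj k)
    (h : labelsIn ℓ S y.1 ∨ (unop k).dim ≤ n) :
    attachDescApp inl cell k y = inl.app k ⟨y.1, h⟩ :=
  dif_pos h

theorem attachDescApp_cell (x : attachedCells K ℓ S n)
    (y : (unionStage K ℓ S (n + 1)).obj (op (bx (n + 1)))) (hxy : y.1 = x.1) :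
    attachDescApp inl cell _ y = (cell x).app _ (𝟙 _) := by
  obtain ⟨x, hx⟩ := x
  obtain rfl : y.1 = x := hxy
  rw [attachDescApp, dif_neg fun h => h.elim hx (Nat.not_succ_le_self n)]
  simp

variable (inl cell) in
noncomputable def attachDesc
    (hcell : ∀ x, stageCellBoundary K ℓ S n x.1 ≫ inl = boundaryIncl (n + 1) ≫ cell x) :
    unionStage K ℓ S (n + 1) ⟶ X where
  app k := ↾attachDescApp inl cell k
  naturality k k' g := by
    ext y
    show attachDescApp inl cell k' ((unionStage K ℓ S (n + 1)).map g y) =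
      X.map g (attachDescApp inl cell k y)
    by_cases h : labelsIn ℓ S y.1 ∨ (unop k).dim ≤ n
    · rw [attachDescApp_of_mem _ h, attachDescApp_of_mem _
        (h.imp (labelsIn_map ℓ S g y.1) ((BoxCat.hom_le g.unop).trans))]
      exact ConcreteCategory.congr_hom (inl.naturality g) ⟨y.1, h⟩
    obtain ⟨⟨d⟩⟩ := k
    obtain rfl : d = n + 1 := congrArg BoxCat.dim (dim_eq_of_not_mem_unionStage y h)
    have hy : ¬ labelsIn ℓ S y.1 := fun hy => h (Or.inl hy)
    rw [attachDescApp_cell ⟨y.1, hy⟩ y rfl]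
    by_cases hk' : (unop k').dim ≤ n
    · rw [attachDescApp_of_mem _ (Or.inr hk')]
      exact (ConcreteCategory.congr_hom (NatTrans.congr_app (hcell ⟨y.1, hy⟩) k')
        ⟨g.unop, by omega⟩).trans
          (ConcreteCategory.congr_hom ((cell ⟨y.1, hy⟩).naturality g) (𝟙 (bx (n + 1))))
    · obtain ⟨⟨d'⟩⟩ := k'
      obtain rfl : d' = n + 1 := le_antisymm (BoxCat.hom_le g.unop) (not_le.1 hk')
      obtain rfl : g = 𝟙 _ := Quiver.Hom.unop_inj (BoxCat.endo_eq_id g.unop)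
      simp only [CategoryTheory.Functor.map_id]
      exact attachDescApp_cell ⟨y.1, hy⟩ y rfl

variable (hcell : ∀ x, stageCellBoundary K ℓ S n x.1 ≫ inl = boundaryIncl (n + 1) ≫ cell x)

theorem unionStageIncl_comp_attachDesc :
    unionStageIncl K ℓ S (Nat.le_succ n) ≫ attachDesc inl cell hcell = inl := by
  ext k y
  exact attachDescApp_of_mem _ y.2

theorem stageCellMap_comp_attachDesc (x : attachedCells K ℓ S n) :
    stageCellMap K ℓ S n x.1 ≫ attachDesc inl cell hcell = cell x := by
  apply yonedaEquiv.injective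
  rw [yonedaEquiv_comp, yonedaEquiv_apply, yonedaEquiv_apply]
  exact attachDescApp_cell x _ (by exact K.map_id_apply _ x.1)

end Attaching

theorem unionStage_succ_isPushout (K : BoxCatᵒᵖ ⥤ Type) (ℓ : K ⟶ bang Λ) (S : Set Λ)
    (n : ℕ) :
    IsPushout (Sigma.desc fun x : attachedCells K ℓ S n => stageCellBoundary K ℓ S n x.1)
      (Limits.Sigma.map fun _ : attachedCells K ℓ S n => boundaryIncl (n + 1))
      (unionStageIncl K ℓ S (Nat.le_succ n))
      (Sigma.desc fun x : attachedCells K ℓ S n => stageCellMap K ℓ S n x.1) := by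
  have w : (Sigma.desc fun x : attachedCells K ℓ S n => stageCellBoundary K ℓ S n x.1) ≫
      unionStageIncl K ℓ S (Nat.le_succ n) =
      (Limits.Sigma.map fun _ : attachedCells K ℓ S n => boundaryIncl (n + 1)) ≫
        Sigma.desc fun x : attachedCells K ℓ S n => stageCellMap K ℓ S n x.1 :=
    Sigma.hom_ext _ _ fun x => by
      simp only [Sigma.ι_desc_assoc, Sigma.ι_map_assoc, Sigma.ι_desc,
        stageCellBoundary_comp_unionStageIncl]
  refine IsPushout.of_isColimit' ⟨w⟩ (PushoutCocone.IsColimit.mk w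
    (fun s => attachDesc s.inl
      (fun x => Sigma.ι (fun _ : attachedCells K ℓ S n => yoneda.obj (bx (n + 1))) x ≫ s.inr)
      fun x => ?_)
    (fun s => unionStageIncl_comp_attachDesc _)
    (fun s => Sigma.hom_ext _ _ fun x => ?_)
    (fun s m hm₁ hm₂ => unionStage_succ_hom_ext ?_ fun x => ?_))
  · simpa only [Sigma.ι_desc_assoc, Sigma.ι_map_assoc] using
      Sigma.ι (fun _ : attachedCells K ℓ S n => boundaryBox (n + 1)) x ≫= s.condition
  · rw [Sigma.ι_desc_assoc, stageCellMap_comp_attachDesc]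
  · rw [hm₁, unionStageIncl_comp_attachDesc]
  · rw [stageCellMap_comp_attachDesc, ← hm₂, Sigma.ι_desc_assoc]

theorem relative_cell_structure_of_label_pullback
    (K : BoxCatᵒᵖ ⥤ Type) (ℓ : K ⟶ bang Λ) (S : Set Λ) :
    -- `L` is the pullback of `ℓ : K → !Σ` along `!Σ' → !Σ`
    IsPullback (labelPullbackIncl K ℓ S) (labelPullbackLabel K ℓ S) ℓ (bangIncl S) ∧
    -- (i) `L_0 = K_0`
    Function.Bijective ((labelPullbackIncl K ℓ S).app (op (bx 0))) ∧
    -- (ii) `M_0 = L`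
    IsIso (labelPullbackToStage K ℓ S) ∧
    -- `K = ⋃_n M_n`
    Nonempty (IsColimit (unionStageCocone K ℓ S)) ∧
    -- for every `n ≥ 1`, attaching the `(n+1)`-cubes of `K ∖ L` to `M_n` gives `M_{n+1}`
    (∀ n : ℕ, IsPushout
      (Sigma.desc fun x : { x : K.obj (op (bx (n + 1))) // ¬ labelsIn ℓ S x } =>
        stageCellBoundary K ℓ S n x.1)
      (Limits.Sigma.map fun _ : { x : K.obj (op (bx (n + 1))) // ¬ labelsIn ℓ S x } =>
        boundaryIncl (n + 1))
      (unionStageIncl K ℓ S (Nat.le_succ n))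
      (Sigma.desc fun x : { x : K.obj (op (bx (n + 1))) // ¬ labelsIn ℓ S x } =>
        stageCellMap K ℓ S n x.1)) :=
  ⟨labelPullback_isPullback K ℓ S, labelPullbackIncl_app_zero_bijective K ℓ S, inferInstance,
    ⟨unionStageCoconeIsColimit K ℓ S⟩, unionStage_succ_isPushout K ℓ S⟩
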